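/- For coprime positive integers a and b, s(a;b) = 0 if and only if a² + 1 ≡ 0 (mod b). -/

import Mathlib

open Finset Real

/-- The classical Dedekind sum `s(a;b)` defined by the cotangent sum. -/
noncomputable def dedekindS (a : ℤ) (b : ℕ) : ℝ :=
  (1 / (4 * (b : ℝ))) * ∑ ν ∈ Finset.Ico 1 b,
    Real.cot (Real.pi * a * ν / b) * Real.cot (Real.pi * ν / b)

/-!
With `((x/b))` the sawtooth on residues mod `b` (`x/b - 1/2` for `x ≠ 0`, and `0` at `0`) and
`e(t) = exp (2πi t)`, every cotangent in the sum has the finite Fourier expansion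
`cot (π m / b) = 2i ∑_x ((x/b)) e(x m / b)`, for all integers `m`: when `b ∣ m` both sides are `0`,
the left one through the junk value `cot (k π) = 0`. Orthogonality of the characters `e(· / b)`
turns `s(a;b)` into the classical `∑_{x mod b} ((x/b)) ((a x/b))`.

If `a² ≡ -1 (mod b)`, the substitution `x ↦ a x` turns this sum into its own negative.
Conversely, with `r_x` the residue of `a x`, one has `4 b² s(a;b) = 4 ∑ x r_x - b² (b - 1)`, while
`∑ (a x - r_x)² = (a² + 1) ∑ x² - 2 a ∑ x r_x` is divisible by `b²`. If `s(a;b) = 0`, then together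
with `6 ∑ x² = b (b - 1) (2b - 1)` this forces `b ∣ a² + 1`.
-/

theorem sum_range_mul_pow_mul_sub_one {R : Type*} [CommRing R] (w : R) (n : ℕ) :
    (∑ j ∈ range n, (j : R) * w ^ j) * (w - 1) = n * w ^ n - w * ∑ j ∈ range n, w ^ j := by
  induction n with
  | zero => simp
  | succ n ih =>
    simp only [sum_range_succ, Nat.cast_succ]
    linear_combination ih

theorem sum_range_sq_mul_six (n : ℕ) :
    (∑ j ∈ range n, (j : ℤ) ^ 2) * 6 = n * (n - 1) * (2 * n - 1) := by
  induction n with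
  | zero => simp
  | succ n ih =>
    rw [sum_range_succ]
    push_cast
    linear_combination ih

namespace ZMod

variable {b : ℕ} [NeZero b]

theorem sum_comp_val {M : Type*} [AddCommMonoid M] (f : ℕ → M) :
    ∑ x : ZMod b, f x.val = ∑ j ∈ range b, f j := by
  obtain ⟨n, rfl⟩ : ∃ n, b = n + 1 := Nat.exists_eq_succ_of_ne_zero (NeZero.ne b)
  exact Fin.sum_univ_eq_sum_range f (n + 1)

theorem sum_comp_mul_of_isUnit {M : Type*} [AddCommMonoid M] {u : ZMod b} (hu : IsUnit u)
    (f : ZMod b → M) : ∑ x, f (u * x) = ∑ x, f x :=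
  Fintype.sum_bijective _ (IsUnit.isUnit_iff_mulLeft_bijective.mp hu) _ _ fun _ => rfl

theorem sum_val_mul_two : (∑ x : ZMod b, (x.val : ℝ)) * 2 = b * (b - 1) := by
  rw [sum_comp_val (fun j => (j : ℝ))]
  have h := congrArg (Nat.cast : ℕ → ℝ) (sum_range_id_mul_two b)
  push_cast [Nat.cast_sub NeZero.one_le] at h
  exact h

noncomputable def sawtooth (x : ZMod b) : ℝ :=
  if x = 0 then 0 else x.val / b - 1 / 2

theorem sawtooth_neg (x : ZMod b) : sawtooth (-x) = -sawtooth x := by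
  unfold sawtooth
  by_cases hx : x = 0
  · simp [hx]
  · have hb : (b : ℝ) ≠ 0 := Nat.cast_ne_zero.mpr (NeZero.ne b)
    rw [if_neg (neg_ne_zero.mpr hx), if_neg hx, neg_val, if_neg hx, Nat.cast_sub x.val_le]
    field_simp
    ring

theorem sum_sawtooth_mul_sawtooth_eq_zero_of_sq_eq_neg_one {u : ZMod b} (hu : u ^ 2 = -1) :
    ∑ x, sawtooth x * sawtooth (u * x) = 0 := by
  have hunit : IsUnit u := IsUnit.of_mul_eq_one (-u) (by linear_combination -hu)
  have h := sum_comp_mul_of_isUnit hunit fun x => sawtooth x * sawtooth (u * x)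
  simp only [← mul_assoc, ← sq, hu, neg_mul, one_mul, sawtooth_neg, sum_neg_distrib,
    mul_comm (sawtooth (u * _))] at h
  linarith

theorem four_mul_sq_mul_sum_sawtooth_mul_sawtooth {u : ZMod b} (hu : IsUnit u) :
    4 * b ^ 2 * ∑ x, sawtooth x * sawtooth (u * x)
      = 4 * ∑ x : ZMod b, (x.val : ℝ) * (u * x).val - b ^ 2 * (b - 1) := by
  have hb : (b : ℝ) ≠ 0 := Nat.cast_ne_zero.mpr (NeZero.ne b)
  have hterm : ∀ x : ZMod b, 4 * b ^ 2 * (sawtooth x * sawtooth (u * x))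
      = 4 * (x.val * (u * x).val) - 2 * b * x.val - 2 * b * (u * x).val + b ^ 2
        - if x = 0 then (b : ℝ) ^ 2 else 0 := by
    intro x
    rcases eq_or_ne x 0 with rfl | hx
    · simp [sawtooth]
    · have hux : u * x ≠ 0 := hu.mul_right_eq_zero.not.mpr hx
      simp only [sawtooth, if_neg hx, if_neg hux]
      field_simp
      ring
  have hr := sum_comp_mul_of_isUnit hu fun x => (x.val : ℝ)
  rw [mul_sum]
  simp only [hterm, sum_sub_distrib, sum_add_distrib, ← mul_sum, Fintype.sum_ite_eq',
    sum_const, card_univ, card, nsmul_eq_mul, hr]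
  linear_combination (-2 * b) * sum_val_mul_two (b := b)

theorem sq_eq_neg_one_of_four_mul_sum_val_mul_val {u : ZMod b} (hu : IsUnit u)
    (h : 4 * ∑ x : ZMod b, (x.val : ℤ) * (u * x).val = b ^ 2 * (b - 1)) : u ^ 2 = -1 := by
  set n : ℤ := (u.val : ℤ)
  have hdvd : ∀ x : ZMod b, (b : ℤ) ∣ n * x.val - (u * x).val := fun x => by
    rw [← intCast_zmod_eq_zero_iff_dvd]
    push_cast
    simp only [n, Int.cast_natCast, natCast_zmod_val, sub_self]
  have hsq := sum_comp_mul_of_isUnit hu fun x => (x.val : ℤ) ^ 2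
  have hsix : (∑ x : ZMod b, (x.val : ℤ) ^ 2) * 6 = b * (b - 1) * (2 * b - 1) := by
    rw [sum_comp_val (fun j => (j : ℤ) ^ 2), sum_range_sq_mul_six]
  have hexpand : ∑ x : ZMod b, (n * x.val - (u * x).val) ^ 2
      = (n ^ 2 + 1) * ∑ x : ZMod b, (x.val : ℤ) ^ 2
        - 2 * n * ∑ x : ZMod b, (x.val : ℤ) * (u * x).val := by
    have hterm : ∀ x : ZMod b, (n * x.val - (u * x).val) ^ 2
        = (n ^ 2 + 1) * (x.val : ℤ) ^ 2 - 2 * n * (x.val * (u * x).val)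
          + (((u * x).val : ℤ) ^ 2 - (x.val : ℤ) ^ 2) := fun x => by ring
    simp only [hterm, sum_add_distrib, sum_sub_distrib, ← mul_sum, hsq, sub_self, add_zero]
  have hb_sq : (b : ℤ) * b ∣ b * ((n ^ 2 + 1) * ((b - 1) * (2 * b - 1))) := by
    rw [show (b : ℤ) * ((n ^ 2 + 1) * ((b - 1) * (2 * b - 1)))
        = 6 * ∑ x : ZMod b, (n * x.val - (u * x).val) ^ 2 + b * b * (3 * n * (b - 1)) by
      linear_combination -(n ^ 2 + 1) * hsix - 6 * hexpand + 3 * n * h]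
    exact dvd_add (dvd_mul_of_dvd_right (dvd_sum fun x _ => by
      rw [← sq]; exact pow_dvd_pow_of_dvd (hdvd x) 2) _) (dvd_mul_right _ _)
  have hb0 : (b : ℤ) ≠ 0 := Nat.cast_ne_zero.mpr (NeZero.ne b)
  have hzero := (intCast_zmod_eq_zero_iff_dvd _ b).mpr ((mul_dvd_mul_iff_left hb0).mp hb_sq)
  push_cast at hzero
  simp only [n, Int.cast_natCast, natCast_zmod_val, natCast_self] at hzero
  linear_combination hzero

theorem two_mul_sum_sawtooth_mul_pow_val {w : ℂ} (hw : w ^ b = 1) :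
    2 * ∑ x : ZMod b, (sawtooth x : ℂ) * w ^ x.val = (w + 1) / (w - 1) := by
  have hb : (b : ℂ) ≠ 0 := Nat.cast_ne_zero.mpr (NeZero.ne b)
  have hsplit : ∑ x : ZMod b, (sawtooth x : ℂ) * w ^ x.val
      = (∑ j ∈ range b, (j : ℂ) * w ^ j) / b - (∑ j ∈ range b, w ^ j) / 2 + 1 / 2 := by
    rw [← sum_comp_val (fun j => (j : ℂ) * w ^ j), ← sum_comp_val (fun j => w ^ j), sum_div,
      sum_div, ← sum_sub_distrib, ← Fintype.sum_ite_eq' (0 : ZMod b) fun _ => (1 / 2 : ℂ),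
      ← sum_add_distrib]
    refine sum_congr rfl fun x _ => ?_
    rcases eq_or_ne x 0 with rfl | hx
    · simp [sawtooth]
    · simp [sawtooth, hx, -natCast_val]
      ring
  rw [hsplit]
  by_cases hw1 : w = 1
  · subst hw1
    have hgauss : (∑ j ∈ range b, (j : ℂ)) * 2 = b * (b - 1) := by
      have h := congrArg (Nat.cast : ℕ → ℂ) (sum_range_id_mul_two b)
      push_cast [Nat.cast_sub NeZero.one_le] at h
      exact h
    simp only [one_pow, mul_one, sum_const, card_range, nsmul_eq_mul, sub_self, div_zero]
    field_simp
    linear_combination hgauss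
  · have hw1' : w - 1 ≠ 0 := sub_ne_zero.mpr hw1
    have hgeom : ∑ j ∈ range b, w ^ j = 0 := by
      have := geom_sum_mul w b
      rw [hw, sub_self, mul_eq_zero] at this
      exact this.resolve_right hw1'
    have hP := sum_range_mul_pow_mul_sub_one w b
    rw [hgeom, hw] at hP
    rw [hgeom]
    field_simp
    linear_combination 2 * hP

theorem cot_pi_mul_div_eq_sum_sawtooth (m : ℤ) :
    (Real.cot (π * m / b) : ℂ)
      = 2 * Complex.I * ∑ y : ZMod b, (sawtooth y : ℂ) * stdAddChar (y * (m : ZMod b)) := by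
  set w : ℂ := stdAddChar (m : ZMod b) with hw
  have hwb : w ^ b = 1 := by
    rw [hw, ← AddChar.map_nsmul_eq_pow, nsmul_eq_mul, natCast_self, zero_mul,
      AddChar.map_zero_eq_one]
  have hpow : ∀ y : ZMod b, stdAddChar (y * (m : ZMod b)) = w ^ y.val := fun y => by
    rw [hw, ← AddChar.map_nsmul_eq_pow, nsmul_eq_mul, natCast_zmod_val]
  have hexp : Complex.exp (2 * π * Complex.I * ((m : ℂ) / b)) = w := by
    rw [hw, stdAddChar_coe, mul_div_assoc]
  simp only [hpow]
  rw [mul_comm 2 Complex.I, mul_assoc, two_mul_sum_sawtooth_mul_pow_val hwb, Complex.ofReal_cot]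
  push_cast
  rw [mul_div_assoc, Complex.cot_pi_eq_exp_ratio, hexp, div_eq_mul_inv, mul_inv, Complex.inv_I,
    ← neg_sub w, inv_neg, div_eq_mul_inv]
  ring

theorem sum_mul_sum_stdAddChar (f g : ZMod b → ℂ) (a : ZMod b) :
    ∑ x : ZMod b, (∑ y, f y * stdAddChar (y * (a * x))) * (∑ z, g z * stdAddChar (z * x))
      = b * ∑ y, f y * g (-(a * y)) := by
  have horth : ∀ c : ZMod b, ∑ x : ZMod b, stdAddChar (x * c) = if c = 0 then (b : ℂ) else 0 :=
    fun c => by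
      rw [AddChar.sum_mulShift c (isPrimitive_stdAddChar b), card, Nat.cast_ite, Nat.cast_zero]
  calc ∑ x : ZMod b, (∑ y, f y * stdAddChar (y * (a * x))) * (∑ z, g z * stdAddChar (z * x))
      = ∑ y, ∑ z, f y * g z * ∑ x : ZMod b, stdAddChar (x * (z + a * y)) := by
        simp only [sum_mul_sum]
        simp only [mul_sum]
        rw [sum_comm]
        refine sum_congr rfl fun y _ => ?_
        rw [sum_comm]
        refine sum_congr rfl fun z _ => sum_congr rfl fun x _ => ?_
        rw [show x * (z + a * y) = y * (a * x) + z * x by ring, AddChar.map_add_eq_mul]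
        ring
    _ = b * ∑ y, f y * g (-(a * y)) := by
        simp only [horth, ← eq_neg_iff_add_eq_zero, mul_ite, mul_zero, sum_ite_eq', mem_univ,
          if_true, mul_sum]
        refine sum_congr rfl fun y _ => by ring

end ZMod

open ZMod in
theorem dedekindS_eq_sum_sawtooth (a : ℤ) (b : ℕ) [NeZero b] :
    dedekindS a b = ∑ x : ZMod b, sawtooth x * sawtooth ((a : ZMod b) * x) := by
  set F : ℕ → ℝ := fun ν => Real.cot (π * a * ν / b) * Real.cot (π * ν / b) with hF
  have hsum : ∑ ν ∈ Ico 1 b, F ν = ∑ x : ZMod b, F x.val := by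
    rw [sum_comp_val F, range_eq_Ico, sum_eq_sum_Ico_succ_bot (NeZero.pos b)]
    simp [hF, Real.cot_eq_cos_div_sin]
  have hterm : ∀ x : ZMod b, (F x.val : ℂ)
      = (2 * Complex.I * ∑ y, (sawtooth y : ℂ) * stdAddChar (y * ((a : ZMod b) * x)))
        * (2 * Complex.I * ∑ z, (sawtooth z : ℂ) * stdAddChar (z * x)) := by
    intro x
    have h1 := cot_pi_mul_div_eq_sum_sawtooth (b := b) (a * x.val)
    have h2 := cot_pi_mul_div_eq_sum_sawtooth (b := b) x.val
    push_cast at h1 h2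
    rw [natCast_zmod_val] at h1 h2
    simp only [hF]
    push_cast
    rw [mul_assoc, h1, h2]
  have hparseval := sum_mul_sum_stdAddChar (fun y => (sawtooth y : ℂ))
    (fun z => (sawtooth z : ℂ)) (a : ZMod b)
  simp only [sawtooth_neg, Complex.ofReal_neg, mul_neg, sum_neg_distrib] at hparseval
  have hI : 2 * Complex.I * (2 * Complex.I) = -4 := by linear_combination 4 * Complex.I_sq
  have hb : (b : ℂ) ≠ 0 := Nat.cast_ne_zero.mpr (NeZero.ne b)
  apply Complex.ofReal_injective
  rw [dedekindS, ← hF, hsum]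
  push_cast
  simp only [hterm, mul_mul_mul_comm (2 * Complex.I), ← mul_sum, hparseval, hI]
  field_simp

theorem dedekindS_eq_zero_iff_general (a b : ℕ) (hb : 0 < b) (hcop : Nat.gcd a b = 1) :
    dedekindS a b = 0 ↔ (b : ℤ) ∣ (a : ℤ) ^ 2 + 1 := by
  have : NeZero b := ⟨hb.ne'⟩
  have hu : IsUnit (a : ZMod b) := (ZMod.isUnit_iff_coprime a b).mpr hcop
  have hdvd : (b : ℤ) ∣ (a : ℤ) ^ 2 + 1 ↔ (a : ZMod b) ^ 2 = -1 := by
    rw [← ZMod.intCast_zmod_eq_zero_iff_dvd]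
    push_cast
    exact add_eq_zero_iff_eq_neg
  rw [hdvd, dedekindS_eq_sum_sawtooth, Int.cast_natCast]
  constructor
  · intro h
    have hM := ZMod.four_mul_sq_mul_sum_sawtooth_mul_sawtooth hu
    rw [h, mul_zero, eq_comm, sub_eq_zero] at hM
    exact ZMod.sq_eq_neg_one_of_four_mul_sum_val_mul_val hu (by exact_mod_cast hM)
  · exact ZMod.sum_sawtooth_mul_sawtooth_eq_zero_of_sq_eq_neg_one

theorem dedekindS_eq_zero_iff (a b : ℕ) (ha : 0 < a) (hb : 0 < b) (hcop : Nat.gcd a b = 1) :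
    dedekindS a b = 0 ↔ (b : ℤ) ∣ (a : ℤ) ^ 2 + 1 :=
  dedekindS_eq_zero_iff_general a b hb hcop
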